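/- arXiv:2403.00387 — 4 statements merged into one kernel-verified Lean document; each statement's English description precedes it below -/
import Mathlib

section
/- For every c > 0, every finite T > 0, and every continuous function X = (x, z1, z2) : [−2, T) → ℝ² × ℝ × ℝ that is differentiable at every t ∈ (0, T) and satisfies there ẋ(t) = c φ(z2(t−2)) g(x(t), z1(t−1)) + c (1−φ(z2(t−2))) A0 x(t), ż1(t) = −z1(t), ż2(t) = −z2(t), the function X is bounded on [−2, T): sup_{t∈[−2,T)} |X(t)| < ∞. Hence the time-delay system (S_c) is forward complete: no solution blows up in finite time. -/
open Set Matrix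

/-- The matrix `A0`. -/
noncomputable def A0 : Matrix (Fin 2) (Fin 2) ℝ := !![-0.1, 0.5; -2, 0]

/-- The matrix `A1`. -/
noncomputable def A1 : Matrix (Fin 2) (Fin 2) ℝ := !![0, 2; -0.5, -0.1]

/-- The saturation function `φ`. -/
noncomputable def phi (s : ℝ) : ℝ := if s < 0 then 0 else if s ≤ 1 then s else 1

/-- `ℝ²` with the Euclidean norm. -/
abbrev E2 : Type := EuclideanSpace ℝ (Fin 2)

/-- Action of a `2 × 2` matrix on `ℝ²`. -/
noncomputable def act (A : Matrix (Fin 2) (Fin 2) ℝ) (x : E2) : E2 :=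
  Matrix.toEuclideanLin A x

/-- The nonlinearity `g(x,u) = (1+|x|²)(φ(u) A1 + (1-φ(u)) A0) x`. -/
noncomputable def gfun (x : E2) (u : ℝ) : E2 :=
  (1 + ‖x‖ ^ 2) • act (phi u • A1 + (1 - phi u) • A0) x

/-- `X = (x, z1, z2) : [-2,∞) → ℝ² × ℝ × ℝ` is a solution of the time-delay system `(S_c)`. -/
def IsSolution (c : ℝ) (x : ℝ → E2) (z1 z2 : ℝ → ℝ) : Prop :=
  ContinuousOn x (Ici (-2 : ℝ)) ∧ ContinuousOn z1 (Ici (-2 : ℝ)) ∧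
  ContinuousOn z2 (Ici (-2 : ℝ)) ∧
  ∀ t : ℝ, 0 < t →
    HasDerivAt x ((c * phi (z2 (t - 2))) • gfun (x t) (z1 (t - 1))
      + (c * (1 - phi (z2 (t - 2)))) • act A0 (x t)) t
    ∧ HasDerivAt z1 (-(z1 t)) t ∧ HasDerivAt z2 (-(z2 t)) t

/-- Euclidean norm `|X(t)|` of the full state `(x(t), z1(t), z2(t)) ∈ ℝ⁴`. -/
noncomputable def Xnorm (x : ℝ → E2) (z1 z2 : ℝ → ℝ) (t : ℝ) : ℝ :=
  Real.sqrt (‖x t‖ ^ 2 + (z1 t) ^ 2 + (z2 t) ^ 2)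

/-- Norm `‖X0‖ = sup_{τ ∈ [-2,0]} |X(τ)|` of the initial segment of a solution. -/
noncomputable def initNorm (x : ℝ → E2) (z1 z2 : ℝ → ℝ) : ℝ :=
  sSup (Xnorm x z1 z2 '' Icc (-2 : ℝ) 0)

/-! Near `T` the delayed input `s(t) = φ(z1(t-1))` stays within `1/40` of `p = φ(z1(T-1))`.
For `P(p) = [[2 - 3p/2, (2p-1)/20], [(2p-1)/20, 1/2 + 3p/2]]` the form `V(y) = yᵀP(p)y` is
nonincreasing along the superlinear part `(1+|x|²)(sA1 + (1-s)A0)x` of the vector field and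
grows at most linearly along `A0 x`, so `V(x) + z1² + z2²` grows at most exponentially on
`[t₁, T)` by Grönwall's inequality, while on the compact interval `[-2, t₁]` the state is
bounded by continuity. -/

lemma phi_eq_max_min (s : ℝ) : phi s = max 0 (min s 1) := by
  unfold phi
  split_ifs with h0 h1
  · rw [max_eq_left (min_le_of_left_le h0.le)]
  · rw [min_eq_left h1, max_eq_right (not_lt.1 h0)]
  · rw [min_eq_right (not_le.1 h1).le, max_eq_right zero_le_one]

lemma continuous_phi : Continuous phi := by
  simp only [funext phi_eq_max_min]
  fun_prop

lemma phi_mem_Icc (s : ℝ) : phi s ∈ Icc 0 1 := by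
  rw [phi_eq_max_min]
  exact ⟨le_max_left _ _, max_le zero_le_one (min_le_right _ _)⟩

lemma act_apply (A : Matrix (Fin 2) (Fin 2) ℝ) (y : E2) (i : Fin 2) :
    act A y i = A i 0 * y 0 + A i 1 * y 1 := by
  simp [act, Matrix.toEuclideanLin, Matrix.toLin'_apply, Matrix.mulVec, dotProduct,
    Fin.sum_univ_two]

lemma norm_sq_eq_fin_two (y : E2) : ‖y‖ ^ 2 = y 0 ^ 2 + y 1 ^ 2 := by
  simp [EuclideanSpace.norm_sq_eq, Fin.sum_univ_two]

lemma quadratic_nonpos_of_neg_of_det_nonneg {a b c : ℝ} (ha : a < 0)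
    (hdet : 0 ≤ a * c - b ^ 2) (u v : ℝ) : a * u ^ 2 + 2 * b * u * v + c * v ^ 2 ≤ 0 := by
  have h : 0 ≤ a * (a * u ^ 2 + 2 * b * u * v + c * v ^ 2) := by
    nlinarith [sq_nonneg (a * u + b * v), mul_nonneg hdet (sq_nonneg v)]
  exact nonpos_of_mul_nonneg_right h ha

/-- `yᵀP(p)y`. -/
noncomputable def lyapForm (p : ℝ) (y : E2) : ℝ :=
  (2 - 3/2*p) * y 0 ^ 2 + (2*p - 1)/10 * (y 0 * y 1) + (1/2 + 3/2*p) * y 1 ^ 2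

/-- `yᵀP(p)w`. -/
noncomputable def lyapPolar (p : ℝ) (y w : E2) : ℝ :=
  (2 - 3/2*p) * (y 0 * w 0) + (2*p - 1)/20 * (y 0 * w 1 + y 1 * w 0)
    + (1/2 + 3/2*p) * (y 1 * w 1)

section LyapunovMatrix

variable {p : ℝ}

lemma two_fifths_mul_norm_sq_le_lyapForm (hp : p ∈ Icc 0 1) (y : E2) :
    2/5 * ‖y‖ ^ 2 ≤ lyapForm p y := by
  obtain ⟨hp0, hp1⟩ := hp
  rw [norm_sq_eq_fin_two, lyapForm]
  nlinarith [sq_nonneg (y 0 + y 1), sq_nonneg (y 0 - y 1),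
    mul_nonneg hp0 (sq_nonneg (y 0 + y 1)), mul_nonneg hp0 (sq_nonneg (y 0 - y 1)),
    mul_nonneg (sub_nonneg.2 hp1) (sq_nonneg (y 0 + y 1)),
    mul_nonneg (sub_nonneg.2 hp1) (sq_nonneg (y 0 - y 1))]

lemma lyapPolar_act_A0_le (hp : p ∈ Icc 0 1) (y : E2) :
    lyapPolar p y (act A0 y) ≤ 5/2 * ‖y‖ ^ 2 := by
  obtain ⟨hp0, hp1⟩ := hp
  rw [norm_sq_eq_fin_two, lyapPolar, act_apply, act_apply]
  norm_num [A0]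
  nlinarith [sq_nonneg (y 0 + y 1), sq_nonneg (y 0 - y 1),
    mul_nonneg hp0 (sq_nonneg (y 0 + y 1)), mul_nonneg hp0 (sq_nonneg (y 0 - y 1)),
    mul_nonneg (sub_nonneg.2 hp1) (sq_nonneg (y 0 + y 1)),
    mul_nonneg (sub_nonneg.2 hp1) (sq_nonneg (y 0 - y 1))]

lemma lyapPolar_act_mix_nonpos {s : ℝ} (hp : p ∈ Icc 0 1) (hsp : |s - p| ≤ 1/40) (y : E2) :
    lyapPolar p y (act (s • A1 + (1 - s) • A0) y) ≤ 0 := by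
  obtain ⟨hp0, hp1⟩ := hp
  obtain ⟨hsl, hsr⟩ := abs_le.mp hsp
  rw [lyapPolar, act_apply, act_apply]
  norm_num [A0, A1]
  -- the entries of `M(s)ᵀP(p) + P(p)M(s)` for `M(s) = s A1 + (1 - s) A0`
  have hdet : 0 ≤ (-1/5 - p/10 + s/4) * (-1/20 + p/10 - s/4) - (1/200 - 94/25*p + 15/4*s) ^ 2 := by
    have hid : (-1/5 - p/10 + s/4) * (-1/20 + p/10 - s/4) - (1/200 - 94/25*p + 15/4*s) ^ 2
        = 399/40000 + 113/5000 * (p * (1 - p)) - 113/8 * (s - p) ^ 2 := by ring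
    rw [hid]
    nlinarith [mul_nonneg hp0 (sub_nonneg.2 hp1)]
  have := quadratic_nonpos_of_neg_of_det_nonneg (by linarith) hdet (y 0) (y 1)
  linarith

lemma lyapPolar_field (κ₁ κ₂ w : ℝ) (y : E2) :
    lyapPolar p y (κ₁ • gfun y w + κ₂ • act A0 y)
      = κ₁ * (1 + ‖y‖ ^ 2) * lyapPolar p y (act (phi w • A1 + (1 - phi w) • A0) y)
        + κ₂ * lyapPolar p y (act A0 y) := by
  simp only [lyapPolar, gfun, PiLp.add_apply, PiLp.smul_apply, smul_eq_mul]
  ring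

lemma two_mul_lyapPolar_field_le {c μ w : ℝ} (hp : p ∈ Icc 0 1) (hc : 0 ≤ c)
    (hμ : μ ∈ Icc 0 1) (hw : |phi w - p| ≤ 1/40) (y : E2) :
    2 * lyapPolar p y ((c * μ) • gfun y w + (c * (1 - μ)) • act A0 y)
      ≤ 25/2 * c * lyapForm p y := by
  rw [lyapPolar_field]
  have hgrowth : 0 ≤ c * μ * (1 + ‖y‖ ^ 2) := by have := hμ.1; positivity
  have hgate : 0 ≤ c * (1 - μ) := mul_nonneg hc (sub_nonneg.2 hμ.2)
  nlinarith [mul_nonpos_of_nonneg_of_nonpos hgrowth (lyapPolar_act_mix_nonpos hp hw y),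
    mul_le_mul_of_nonneg_left (lyapPolar_act_A0_le hp y) hgate,
    mul_le_mul_of_nonneg_left (two_fifths_mul_norm_sq_le_lyapForm hp y) hc,
    mul_nonneg (mul_nonneg hc hμ.1) (sq_nonneg ‖y‖)]

lemma hasDerivAt_lyapForm {x : ℝ → E2} {x' : E2} {t : ℝ} (p : ℝ) (hx : HasDerivAt x x' t) :
    HasDerivAt (fun τ ↦ lyapForm p (x τ)) (2 * lyapPolar p (x t) x') t := by
  have hcoord (i : Fin 2) : HasDerivAt (fun τ ↦ x τ i) (x' i) t :=
    (EuclideanSpace.proj (𝕜 := ℝ) i).hasFDerivAt.comp_hasDerivAt t hx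
  have h := ((((hcoord 0).fun_pow 2).const_mul (2 - 3/2*p)).fun_add
    (((hcoord 0).fun_mul (hcoord 1)).const_mul ((2*p - 1)/10))).fun_add
      (((hcoord 1).fun_pow 2).const_mul (1/2 + 3/2*p))
  refine h.congr_deriv ?_
  simp only [lyapPolar]
  ring

end LyapunovMatrix

noncomputable def lyapEnergy (p : ℝ) (x : ℝ → E2) (z1 z2 : ℝ → ℝ) (t : ℝ) : ℝ :=
  lyapForm p (x t) + z1 t ^ 2 + z2 t ^ 2

section LyapunovEnergy

variable {p : ℝ} {x : ℝ → E2} {z1 z2 : ℝ → ℝ}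

lemma exists_hasDerivAt_lyapEnergy_le {c μ w t : ℝ} (hp : p ∈ Icc 0 1) (hc : 0 ≤ c)
    (hμ : μ ∈ Icc 0 1) (hw : |phi w - p| ≤ 1/40)
    (hx : HasDerivAt x ((c * μ) • gfun (x t) w + (c * (1 - μ)) • act A0 (x t)) t)
    (hz1 : HasDerivAt z1 (-(z1 t)) t) (hz2 : HasDerivAt z2 (-(z2 t)) t) :
    ∃ e, HasDerivAt (lyapEnergy p x z1 z2) e t ∧ e ≤ 25/2 * c * lyapEnergy p x z1 z2 t := by
  refine ⟨_, ((hasDerivAt_lyapForm p hx).fun_add (hz1.fun_pow 2)).fun_add (hz2.fun_pow 2), ?_⟩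
  have := two_mul_lyapPolar_field_le hp hc hμ hw (x t)
  simp only [lyapEnergy]
  nlinarith [sq_nonneg (z1 t), sq_nonneg (z2 t)]

lemma lyapEnergy_nonneg (hp : p ∈ Icc 0 1) (t : ℝ) : 0 ≤ lyapEnergy p x z1 z2 t := by
  have := (by positivity : (0 : ℝ) ≤ 2/5 * ‖x t‖ ^ 2).trans
    (two_fifths_mul_norm_sq_le_lyapForm hp (x t))
  unfold lyapEnergy
  positivity

lemma Xnorm_le_sqrt_lyapEnergy (hp : p ∈ Icc 0 1) (t : ℝ) :
    Xnorm x z1 z2 t ≤ √(5/2 * lyapEnergy p x z1 z2 t) := by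
  have := two_fifths_mul_norm_sq_le_lyapForm hp (x t)
  refine Real.sqrt_le_sqrt ?_
  simp only [lyapEnergy]
  nlinarith [sq_nonneg (z1 t), sq_nonneg (z2 t)]

end LyapunovEnergy

lemma le_mul_exp_of_hasDerivAt_le_mul {f : ℝ → ℝ} {K a b : ℝ}
    (hf : ∀ t ∈ Icc a b, ∃ f', HasDerivAt f f' t ∧ f' ≤ K * f t) :
    ∀ t ∈ Icc a b, f t ≤ f a * Real.exp (K * (t - a)) := by
  have hd : ∀ t ∈ Icc a b, HasDerivAt f (deriv f t) t ∧ deriv f t ≤ K * f t := by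
    intro t ht
    obtain ⟨f', hf', hle⟩ := hf t ht
    exact hf'.deriv ▸ ⟨hf', hle⟩
  intro t ht
  have := le_gronwallBound_of_liminf_deriv_right_le (ε := 0)
    (fun s hs ↦ (hd s hs).1.continuousAt.continuousWithinAt)
    (fun s hs _ hr ↦ (hd s (Ico_subset_Icc_self hs)).1.hasDerivWithinAt.liminf_right_slope_le hr)
    le_rfl (fun s hs ↦ (add_zero (K * f s)).symm ▸ (hd s (Ico_subset_Icc_self hs)).2) t ht
  rwa [gronwallBound_ε0] at this

lemma Xnorm_le_of_input_near {c p a b : ℝ} {x : ℝ → E2} {z1 z2 : ℝ → ℝ}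
    (hp : p ∈ Icc 0 1) (hc : 0 ≤ c) (hab : a ≤ b)
    (hode : ∀ t ∈ Icc a b,
      HasDerivAt x ((c * phi (z2 (t - 2))) • gfun (x t) (z1 (t - 1))
        + (c * (1 - phi (z2 (t - 2)))) • act A0 (x t)) t
      ∧ HasDerivAt z1 (-(z1 t)) t ∧ HasDerivAt z2 (-(z2 t)) t)
    (hinput : ∀ t ∈ Icc a b, |phi (z1 (t - 1)) - p| ≤ 1/40) :
    Xnorm x z1 z2 b ≤ √(5/2 * (lyapEnergy p x z1 z2 a * Real.exp (25/2 * c * (b - a)))) := by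
  have hgronwall := le_mul_exp_of_hasDerivAt_le_mul (fun t ht ↦ by
    obtain ⟨hx, hz1, hz2⟩ := hode t ht
    exact exists_hasDerivAt_lyapEnergy_le hp hc (phi_mem_Icc _) (hinput t ht) hx hz1 hz2)
    b ⟨hab, le_rfl⟩
  exact (Xnorm_le_sqrt_lyapEnergy hp b).trans (by gcongr)

lemma exists_forall_Ico_abs_sub_lt {f : ℝ → ℝ} {T ε : ℝ} (hT : 0 < T) (hf : ContinuousAt f T)
    (hε : 0 < ε) : ∃ t₁ ∈ Ioo 0 T, ∀ t ∈ Ico t₁ T, |f t - f T| < ε := by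
  have hev : ∀ᶠ t in nhdsWithin T (Iio T), |f t - f T| < ε ∧ 0 < t :=
    ((hf.eventually (Metric.ball_mem_nhds _ hε)).and (lt_mem_nhds hT)).filter_mono
      nhdsWithin_le_nhds
  obtain ⟨l, hl, hsub⟩ := mem_nhdsLT_iff_exists_Ico_subset.1 hev
  exact ⟨l, ⟨(hsub ⟨le_rfl, hl⟩).2, hl⟩, fun t ht ↦ (hsub ht).1⟩

/-- Forward completeness of `(S_c)`: every continuous `X = (x,z1,z2) : [-2,T) → ℝ²×ℝ×ℝ`
satisfying the delay equations on `(0,T)` is bounded on `[-2,T)`, so no solution blows up in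
finite time. -/
theorem stmt_2 (c T : ℝ) (hc : 0 < c) (hT : 0 < T)
    (x : ℝ → E2) (z1 z2 : ℝ → ℝ)
    (hcx : ContinuousOn x (Ico (-2 : ℝ) T))
    (hcz1 : ContinuousOn z1 (Ico (-2 : ℝ) T))
    (hcz2 : ContinuousOn z2 (Ico (-2 : ℝ) T))
    (hode : ∀ t ∈ Ioo (0 : ℝ) T,
      HasDerivAt x ((c * phi (z2 (t - 2))) • gfun (x t) (z1 (t - 1))
        + (c * (1 - phi (z2 (t - 2)))) • act A0 (x t)) t
      ∧ HasDerivAt z1 (-(z1 t)) t ∧ HasDerivAt z2 (-(z2 t)) t) :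
    ∃ B : ℝ, ∀ t ∈ Ico (-2 : ℝ) T, Xnorm x z1 z2 t ≤ B := by
  set p := phi (z1 (T - 1))
  have hp : p ∈ Icc 0 1 := phi_mem_Icc _
  have hinput : ContinuousAt (fun t ↦ phi (z1 (t - 1))) T :=
    continuous_phi.continuousAt.comp <| (hcz1.continuousAt
      (Ico_mem_nhds (by linarith) (by linarith))).comp (by fun_prop)
  obtain ⟨t₁, ⟨ht₁0, ht₁T⟩, hclose⟩ :=
    exists_forall_Ico_abs_sub_lt hT hinput (by norm_num : (0 : ℝ) < 1/40)
  have hhead : Icc (-2) t₁ ⊆ Ico (-2 : ℝ) T := Icc_subset_Ico_right ht₁T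
  obtain ⟨B, hB⟩ := isCompact_Icc.exists_bound_of_continuousOn (f := Xnorm x z1 z2) <| by
    have := hcx.mono hhead; have := hcz1.mono hhead; have := hcz2.mono hhead
    unfold Xnorm; fun_prop
  refine ⟨max B √(5/2 * (lyapEnergy p x z1 z2 t₁ * Real.exp (25/2 * c * (T - t₁)))),
    fun t ht ↦ ?_⟩
  rcases le_or_gt t t₁ with htt₁ | ht₁t
  · exact (le_abs_self _).trans ((hB t ⟨ht.1, htt₁⟩).trans (le_max_left _ _))
  have hIcc : Icc t₁ t ⊆ Ico t₁ T := Icc_subset_Ico_right ht.2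
  have htail := Xnorm_le_of_input_near hp hc.le ht₁t.le
    (fun τ hτ ↦ hode τ ⟨ht₁0.trans_le hτ.1, (hIcc hτ).2⟩) (fun τ hτ ↦ (hclose τ (hIcc hτ)).le)
  refine htail.trans ((Real.sqrt_le_sqrt ?_).trans (le_max_right _ _))
  have := lyapEnergy_nonneg (x := x) (z1 := z1) (z2 := z2) hp t₁
  gcongr
  exact ht.2.le
end

section
/- There exist a symmetric positive definite real 2×2 matrix P0 satisfying the Lyapunov equation A0ᵀ P0 + P0 A0 = −I, and a constant λ̄ ∈ (0,1), such that for every λ ∈ [0, λ̄] the matrix inequality A_λᵀ P0 + P0 A_λ ≼ −(1/2) I holds, i.e. xᵀ(A_λᵀ P0 + P0 A_λ)x ≤ −(1/2)|x|² for all x ∈ ℝ². -/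
open Set Matrix

/-- Convex combination `A_λ = λ A1 + (1-λ) A0`. -/
noncomputable def Amat (l : ℝ) : Matrix (Fin 2) (Fin 2) ℝ := l • A1 + (1 - l) • A0

/-!
`A0` is Hurwitz, so the Lyapunov equation `A0ᵀ P + P A0 = -I` has a positive definite solution
`P0`. The Lyapunov form of `A_λ` is affine in `λ`: it equals `λ (A1ᵀ P0 + P0 A1) - (1 - λ) I`.
Since `A1ᵀ P0 + P0 A1 ≼ c I` for some `c`, the form stays below `-(1/2) I` as long as
`λ (c + 1) ≤ 1/2`; here `c = 49`, so `λ̄ = 1/100` works.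
-/

section Lyapunov

variable {n : Type*} [Fintype n] [DecidableEq n]

theorem transpose_mul_add_mul_lineMap (A B P : Matrix n n ℝ) (l : ℝ) :
    (l • B + (1 - l) • A)ᵀ * P + P * (l • B + (1 - l) • A) =
      l • (Bᵀ * P + P * B) + (1 - l) • (Aᵀ * P + P * A) := by
  simp only [transpose_add, transpose_smul, add_mul, mul_add, smul_mul_assoc, mul_smul_comm]
  module

theorem dotProduct_mulVec_lyapunov_lineMap_le {A B P : Matrix n n ℝ} {c l : ℝ}
    (hA : Aᵀ * P + P * A = -1) (hB : ∀ v, v ⬝ᵥ (Bᵀ * P + P * B) *ᵥ v ≤ c * (v ⬝ᵥ v))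
    (hl₀ : 0 ≤ l) (hl : l * (c + 1) ≤ 1 / 2) (v : n → ℝ) :
    v ⬝ᵥ ((l • B + (1 - l) • A)ᵀ * P + P * (l • B + (1 - l) • A)) *ᵥ v ≤
      -(1 / 2) * (v ⬝ᵥ v) := by
  rw [transpose_mul_add_mul_lineMap, hA, add_mulVec, smul_mulVec, smul_mulVec, neg_mulVec,
    one_mulVec, dotProduct_add, dotProduct_smul, dotProduct_smul, dotProduct_neg, smul_eq_mul,
    smul_eq_mul]
  have hv : 0 ≤ v ⬝ᵥ v := by simpa using dotProduct_self_star_nonneg v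
  nlinarith [mul_le_mul_of_nonneg_left (hB v) hl₀]

end Lyapunov

noncomputable def lyapunovP0 : Matrix (Fin 2) (Fin 2) ℝ := !![25, -1; -1, 63 / 10]

theorem lyapunovP0_isSymm : lyapunovP0.IsSymm := by
  ext i j
  fin_cases i <;> fin_cases j <;> simp [lyapunovP0]

theorem lyapunovP0_posDef : lyapunovP0.PosDef := by
  refine posDef_iff_dotProduct_mulVec.2 ⟨lyapunovP0_isSymm, fun v hv => ?_⟩
  have hv' : v 0 ≠ 0 ∨ v 1 ≠ 0 := by
    by_contra! h
    exact hv (funext fun i => by fin_cases i <;> simp [h.1, h.2])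
  have hform :
      star v ⬝ᵥ lyapunovP0 *ᵥ v = 24 * v 0 ^ 2 + 53 / 10 * v 1 ^ 2 + (v 0 - v 1) ^ 2 := by
    simp only [dotProduct, Pi.star_apply, star_trivial, mulVec, lyapunovP0, of_apply, cons_val',
      cons_val_fin_one, Fin.sum_univ_two, cons_val_zero, cons_val_one]
    ring
  rw [hform]
  rcases hv' with h | h <;> positivity

theorem lyapunovP0_spec : A0ᵀ * lyapunovP0 + lyapunovP0 * A0 = -1 := by
  ext i j
  fin_cases i <;> fin_cases j <;> norm_num [A0, lyapunovP0, mul_apply, Fin.sum_univ_two]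

theorem dotProduct_mulVec_A1_lyapunov_le (v : Fin 2 → ℝ) :
    v ⬝ᵥ (A1ᵀ * lyapunovP0 + lyapunovP0 * A1) *ᵥ v ≤ 49 * (v ⬝ᵥ v) := by
  have hQ : A1ᵀ * lyapunovP0 + lyapunovP0 * A1 = !![1, 939 / 20; 939 / 20, -263 / 50] := by
    ext i j
    fin_cases i <;> fin_cases j <;> norm_num [A1, lyapunovP0, mul_apply, Fin.sum_univ_two]
  rw [hQ]
  simp only [dotProduct, mulVec, of_apply, cons_val', cons_val_fin_one, Fin.sum_univ_two,
    cons_val_zero, cons_val_one]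
  nlinarith [sq_nonneg (960 * v 0 - 939 * v 1), sq_nonneg (v 1)]

/-- There is a symmetric positive definite `P0` with `A0ᵀ P0 + P0 A0 = -I` and `λ̄ ∈ (0,1)`
such that `A_λᵀ P0 + P0 A_λ ≼ -(1/2) I` for all `λ ∈ [0, λ̄]`. -/
theorem stmt_5 :
    ∃ P0 : Matrix (Fin 2) (Fin 2) ℝ, P0.IsSymm ∧ P0.PosDef ∧
      A0ᵀ * P0 + P0 * A0 = -(1 : Matrix (Fin 2) (Fin 2) ℝ) ∧
      ∃ lbar : ℝ, lbar ∈ Ioo (0 : ℝ) 1 ∧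
        ∀ l ∈ Icc (0 : ℝ) lbar, ∀ v : Fin 2 → ℝ,
          v ⬝ᵥ ((Amat l)ᵀ * P0 + P0 * Amat l).mulVec v ≤ -(1 / 2) * (v ⬝ᵥ v) := by
  refine ⟨lyapunovP0, lyapunovP0_isSymm, lyapunovP0_posDef, lyapunovP0_spec, 1 / 100,
    ⟨by norm_num, by norm_num⟩, ?_⟩
  rintro l ⟨hl₀, hl⟩ v
  exact dotProduct_mulVec_lyapunov_lineMap_le lyapunovP0_spec dotProduct_mulVec_A1_lyapunov_le hl₀
    (by linarith) v
end

section
/- For every λ ∈ [0,1], the matrix A_λ := λ A1 + (1−λ) A0 is Hurwitz: every complex eigenvalue of A_λ has strictly negative real part. -/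
open Set Matrix

/-- For every `λ ∈ [0,1]`, the matrix `A_λ` is Hurwitz: every complex eigenvalue of `A_λ`
has strictly negative real part. -/
theorem stmt_6 :
    ∀ l ∈ Icc (0 : ℝ) 1,
      ∀ μ ∈ spectrum ℂ ((Amat l).map (algebraMap ℝ ℂ)), μ.re < 0 := by
  intro l hl μ hμ
  obtain ⟨h0, h1⟩ := hl
  rw [spectrum.mem_iff] at hμ
  rw [Matrix.isUnit_iff_isUnit_det, isUnit_iff_ne_zero, not_not] at hμ
  simp [Amat, A0, A1, Matrix.det_fin_two, Matrix.algebraMap_matrix_apply, Matrix.map_apply] at hμ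
  rw [Complex.ext_iff] at hμ
  obtain ⟨ha, hb⟩ := hμ
  simp [Complex.add_re, Complex.add_im, Complex.mul_re, Complex.mul_im, Complex.sub_re,
    Complex.sub_im, Complex.ofReal_re, Complex.ofReal_im] at ha hb
  norm_num at ha hb
  have hb' : μ.im * (2 * μ.re + 1 / 10) = 0 := by linear_combination hb
  rcases mul_eq_zero.mp hb' with h | h
  · by_contra hc
    push_neg at hc
    nlinarith [ha, h, h0, h1, sq_nonneg μ.re, sq_nonneg l]
  · linarith
end

section
/- For every c > 0, the origin of the time-delay system (S_c) is Lyapunov stable: for every ε > 0 there exists δ > 0 such that every solution X of (S_c) with ‖X0‖ ≤ δ satisfies |X(t)| ≤ ε for all t ≥ 0. -/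
open Set Matrix

/-!
The quadratic form `V(x) = 2 x₀² + 0.5025 x₁² - 0.1 x₀ x₁` decreases along `A0`
(`V̇ ≤ -|x|²/20`) and grows at most like `4|x|²` along `A1`. The states `z1, z2` decay, so the
switching weight `φ(z2(t-2))` stays below `1/200` when `‖X0‖` is small; while `|x| ≤ 1` the factor
`1 + |x|² ≤ 2` then keeps the `A1` part below the `A0` decrease, so `V` is nonincreasing on the
sublevel set `{V ≤ 1/2} ⊆ {|x| ≤ 1}` and solutions never leave it. As `|x|²/2 ≤ V ≤ 3|x|²`, this
gives `|x(t)|² ≤ 6|x(0)|²`.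
-/

theorem antitoneOn_Ici_of_deriv_nonpos_of_le {f f' : ℝ → ℝ} {a B : ℝ}
    (hf : ContinuousOn f (Ici a)) (hf' : ∀ t > a, HasDerivAt f (f' t) t)
    (hneg : ∀ t > a, f t ≤ B → f' t ≤ 0) (ha : f a < B) : AntitoneOn f (Ici a) := by
  have antitone_of_le {D : Set ℝ} (hD : Convex ℝ D) (hDa : D ⊆ Ici a)
      (hle : ∀ t ∈ interior D, a < t ∧ f t ≤ B) : AntitoneOn f D :=
    antitoneOn_of_hasDerivWithinAt_nonpos hD (hf.mono hDa)
      (fun t ht => (hf' t (hle t ht).1).hasDerivWithinAt)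
      (fun t ht => hneg t (hle t ht).1 (hle t ht).2)
  have below : ∀ t ≥ a, f t < B := by
    by_contra! ⟨t, hat, hBt⟩
    -- the first time `s` at which `f` reaches `B`
    have hclosed : IsClosed (Icc a t ∩ f ⁻¹' Ici B) :=
      (hf.mono Icc_subset_Ici_self).preimage_isClosed_of_isClosed isClosed_Icc isClosed_Ici
    obtain ⟨s, ⟨⟨has, hst⟩, hBs⟩, hleast⟩ :=
      (isCompact_Icc.of_isClosed_subset hclosed inter_subset_left).exists_isLeast
        ⟨t, ⟨hat, le_rfl⟩, hBt⟩
    have hlt : ∀ u ∈ Ico a s, f u < B := fun u ⟨hau, hus⟩ =>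
      not_le.1 fun hBu => (hleast ⟨⟨hau, hus.le.trans hst⟩, hBu⟩).not_gt hus
    have hanti : AntitoneOn f (Icc a s) := by
      refine antitone_of_le (convex_Icc a s) Icc_subset_Ici_self fun u hu => ?_
      rw [interior_Icc] at hu
      exact ⟨hu.1, (hlt u ⟨hu.1.le, hu.2⟩).le⟩
    exact (hanti (left_mem_Icc.2 has) (right_mem_Icc.2 has) has).not_gt (ha.trans_le hBs)
  refine antitone_of_le (convex_Ici a) subset_rfl fun u hu => ?_
  rw [interior_Ici] at hu
  exact ⟨hu, (below u hu.le).le⟩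

theorem abs_le_abs_of_hasDerivAt_neg_self {z : ℝ → ℝ} {a : ℝ} (hz : ContinuousOn z (Ici a))
    (hz' : ∀ t > a, HasDerivAt z (-z t) t) {t : ℝ} (ht : a ≤ t) : |z t| ≤ |z a| := by
  have hanti : AntitoneOn (fun s => z s ^ 2) (Ici a) := by
    refine antitoneOn_of_hasDerivWithinAt_nonpos (convex_Ici a) (hz.pow 2)
      (fun s hs => ((hz' s ?_).pow 2).hasDerivWithinAt) fun s _ => ?_
    · rwa [interior_Ici] at hs
    · norm_num
      nlinarith [sq_nonneg (z s)]
  exact sq_le_sq.1 (hanti self_mem_Ici ht ht)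

theorem abs_le_of_abs_le_on_Icc {z : ℝ → ℝ} {a b δ : ℝ} (hab : a ≤ b)
    (hz : ContinuousOn z (Ici a)) (hz' : ∀ t > b, HasDerivAt z (-z t) t)
    (hinit : ∀ τ ∈ Icc a b, |z τ| ≤ δ) {s : ℝ} (hs : a ≤ s) : |z s| ≤ δ := by
  rcases le_total s b with hsb | hbs
  · exact hinit s ⟨hs, hsb⟩
  · exact (abs_le_abs_of_hasDerivAt_neg_self (hz.mono (Ici_subset_Ici.2 hab)) hz' hbs).trans
      (hinit b ⟨hab, le_rfl⟩)

theorem phi_nonneg (s : ℝ) : 0 ≤ phi s := by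
  unfold phi; split_ifs <;> linarith

theorem phi_le_one (s : ℝ) : phi s ≤ 1 := by
  unfold phi; split_ifs <;> linarith

theorem phi_le_of_le {s d : ℝ} (h : s ≤ d) (hd : 0 ≤ d) : phi s ≤ d := by
  unfold phi; split_ifs <;> linarith

theorem norm_sq_E2 (x : E2) : ‖x‖ ^ 2 = x 0 ^ 2 + x 1 ^ 2 := by
  simp [EuclideanSpace.real_norm_sq_eq, Fin.sum_univ_two]

theorem act_add (A B : Matrix (Fin 2) (Fin 2) ℝ) (x : E2) :
    act (A + B) x = act A x + act B x := by
  simp [act]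

theorem act_smul (r : ℝ) (A : Matrix (Fin 2) (Fin 2) ℝ) (x : E2) :
    act (r • A) x = r • act A x := by
  simp [act]

theorem act_A0 (x : E2) : act A0 x = !₂[-0.1 * x 0 + 0.5 * x 1, -2 * x 0] := by
  ext i; fin_cases i <;> simp [act, A0, Matrix.toEuclideanLin, Matrix.mulVec, dotProduct]

theorem act_A1 (x : E2) : act A1 x = !₂[2 * x 1, -0.5 * x 0 - 0.1 * x 1] := by
  ext i
  fin_cases i <;> simp [act, A1, Matrix.toEuclideanLin, Matrix.mulVec, dotProduct, sub_eq_add_neg]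

noncomputable def lyap (x : E2) : ℝ := 2 * x 0 ^ 2 + 0.5025 * x 1 ^ 2 - 0.1 * (x 0 * x 1)

noncomputable def lyapDeriv (x : E2) : E2 →L[ℝ] ℝ :=
  (4 * x 0 - 0.1 * x 1) • EuclideanSpace.proj 0 + (1.005 * x 1 - 0.1 * x 0) • EuclideanSpace.proj 1

theorem lyapDeriv_apply (x y : E2) :
    lyapDeriv x y = (4 * x 0 - 0.1 * x 1) * y 0 + (1.005 * x 1 - 0.1 * x 0) * y 1 := by
  simp [lyapDeriv]

theorem continuous_lyap : Continuous lyap := by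
  unfold lyap; fun_prop

theorem HasDerivAt.lyap_comp {x : ℝ → E2} {x' : E2} {t : ℝ} (h : HasDerivAt x x' t) :
    HasDerivAt (fun s => lyap (x s)) (lyapDeriv (x t) x') t := by
  have hcoord (i : Fin 2) : HasDerivAt (fun s => x s i) (x' i) t :=
    (EuclideanSpace.proj (𝕜 := ℝ) i).hasFDerivAt.comp_hasDerivAt t h
  refine ((((hcoord 0).pow 2).const_mul 2).add (((hcoord 1).pow 2).const_mul 0.5025)
    |>.sub (((hcoord 0).mul (hcoord 1)).const_mul 0.1)).congr_deriv ?_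
  rw [lyapDeriv_apply]; push_cast; ring

theorem half_norm_sq_le_lyap (x : E2) : ‖x‖ ^ 2 / 2 ≤ lyap x := by
  rw [norm_sq_E2, lyap]; nlinarith [sq_nonneg (x 0 - x 1 / 30), sq_nonneg (x 1)]

theorem lyap_le_three_mul_norm_sq (x : E2) : lyap x ≤ 3 * ‖x‖ ^ 2 := by
  rw [norm_sq_E2, lyap]; nlinarith [sq_nonneg (x 0 + x 1), sq_nonneg (x 1)]

theorem lyapDeriv_act_A0 (x : E2) : lyapDeriv x (act A0 x) ≤ -(‖x‖ ^ 2 / 20) := by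
  rw [norm_sq_E2, act_A0, lyapDeriv_apply]
  simp only [cons_val_zero, cons_val_one, cons_val_fin_one]
  nlinarith [sq_nonneg (x 0)]

theorem lyapDeriv_act_A1 (x : E2) : lyapDeriv x (act A1 x) ≤ 4 * ‖x‖ ^ 2 := by
  rw [norm_sq_E2, act_A1, lyapDeriv_apply]
  simp only [cons_val_zero, cons_val_one, cons_val_fin_one]
  nlinarith [sq_nonneg (x 0 - x 1), sq_nonneg (x 0), sq_nonneg (x 1)]

theorem switched_rate_nonpos {D₀ D₁ s p q : ℝ} (hD₀ : D₀ ≤ -(s / 20)) (hD₁ : D₁ ≤ 4 * s)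
    (hs₀ : 0 ≤ s) (hs₁ : s ≤ 1) (hp₀ : 0 ≤ p) (hp₁ : p ≤ 1) (hq₀ : 0 ≤ q) (hq : q ≤ 1 / 200) :
    q * (1 + s) * (p * D₁ + (1 - p) * D₀) + (1 - q) * D₀ ≤ 0 := by
  have hmix : p * D₁ + (1 - p) * D₀ ≤ 4 * s := by nlinarith
  have hgrow : q * (1 + s) * (p * D₁ + (1 - p) * D₀) ≤ 8 * s * q := by
    rcases le_total (p * D₁ + (1 - p) * D₀) 0 with h | h
    · nlinarith [mul_nonneg hq₀ (by linarith : 0 ≤ 1 + s)]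
    · nlinarith [mul_le_mul_of_nonneg_left hmix (mul_nonneg hq₀ (by linarith : 0 ≤ 1 + s)),
        mul_nonneg (mul_nonneg hq₀ hs₀) (sub_nonneg.2 hs₁)]
  nlinarith

theorem lyapDeriv_field_nonpos {c w u : ℝ} (hc : 0 ≤ c) (hw : w ≤ 1 / 200) {x : E2}
    (hx : ‖x‖ ^ 2 ≤ 1) :
    lyapDeriv x ((c * phi w) • gfun x u + (c * (1 - phi w)) • act A0 x) ≤ 0 := by
  have hfield : lyapDeriv x ((c * phi w) • gfun x u + (c * (1 - phi w)) • act A0 x) =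
      c * (phi w * (1 + ‖x‖ ^ 2) * (phi u * lyapDeriv x (act A1 x)
        + (1 - phi u) * lyapDeriv x (act A0 x)) + (1 - phi w) * lyapDeriv x (act A0 x)) := by
    simp only [gfun, act_add, act_smul, map_add, map_smul, smul_eq_mul]
    ring
  rw [hfield]
  exact mul_nonpos_of_nonneg_of_nonpos hc <| switched_rate_nonpos (lyapDeriv_act_A0 x)
    (lyapDeriv_act_A1 x) (sq_nonneg _) hx (phi_nonneg u) (phi_le_one u) (phi_nonneg w) (phi_le_of_le hw (by norm_num))

theorem IsSolution.norm_sq_le {c : ℝ} (hc : 0 ≤ c) {x : ℝ → E2} {z1 z2 : ℝ → ℝ}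
    (hsol : IsSolution c x z1 z2) (hz2 : ∀ s ≥ -2, z2 s ≤ 1 / 200) (hx0 : ‖x 0‖ ^ 2 < 1 / 6)
    {t : ℝ} (ht : 0 ≤ t) : ‖x t‖ ^ 2 ≤ 6 * ‖x 0‖ ^ 2 := by
  have hcont : ContinuousOn (fun s => lyap (x s)) (Ici 0) :=
    continuous_lyap.comp_continuousOn (hsol.1.mono (Ici_subset_Ici.2 (by norm_num)))
  have hanti : AntitoneOn (fun s => lyap (x s)) (Ici 0) :=
    antitoneOn_Ici_of_deriv_nonpos_of_le (B := 1 / 2) hcont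
      (fun s hs => (hsol.2.2.2 s hs).1.lyap_comp)
      (fun s hs hV => lyapDeriv_field_nonpos hc (hz2 _ (by linarith))
        (by linarith [half_norm_sq_le_lyap (x s)]))
      (by linarith [lyap_le_three_mul_norm_sq (x 0)])
  linarith [half_norm_sq_le_lyap (x t), lyap_le_three_mul_norm_sq (x 0),
    hanti self_mem_Ici ht ht]

theorem norm_le_Xnorm (x : ℝ → E2) (z1 z2 : ℝ → ℝ) (t : ℝ) : ‖x t‖ ≤ Xnorm x z1 z2 t :=
  (le_abs_self _).trans (Real.abs_le_sqrt (by nlinarith [sq_nonneg (z1 t), sq_nonneg (z2 t)]))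

theorem abs_z1_le_Xnorm (x : ℝ → E2) (z1 z2 : ℝ → ℝ) (t : ℝ) : |z1 t| ≤ Xnorm x z1 z2 t :=
  Real.abs_le_sqrt (by nlinarith [sq_nonneg ‖x t‖, sq_nonneg (z2 t)])

theorem abs_z2_le_Xnorm (x : ℝ → E2) (z1 z2 : ℝ → ℝ) (t : ℝ) : |z2 t| ≤ Xnorm x z1 z2 t :=
  Real.abs_le_sqrt (by nlinarith [sq_nonneg ‖x t‖, sq_nonneg (z1 t)])

theorem Xnorm_le_initNorm {x : ℝ → E2} {z1 z2 : ℝ → ℝ} (hx : ContinuousOn x (Icc (-2) 0))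
    (hz1 : ContinuousOn z1 (Icc (-2) 0)) (hz2 : ContinuousOn z2 (Icc (-2) 0)) {τ : ℝ}
    (hτ : τ ∈ Icc (-2 : ℝ) 0) : Xnorm x z1 z2 τ ≤ initNorm x z1 z2 := by
  have hcont : ContinuousOn (Xnorm x z1 z2) (Icc (-2) 0) :=
    Real.continuous_sqrt.comp_continuousOn (((hx.norm.pow 2).add (hz1.pow 2)).add (hz2.pow 2))
  exact le_csSup (isCompact_Icc.image_of_continuousOn hcont).bddAbove (mem_image_of_mem _ hτ)

/-- Lyapunov stability of the origin of `(S_c)`: for every `ε > 0` there is `δ > 0` such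
that every solution with `‖X0‖ ≤ δ` satisfies `|X(t)| ≤ ε` for all `t ≥ 0`. -/
theorem stmt_8 (c : ℝ) (hc : 0 < c) :
    ∀ ε : ℝ, 0 < ε → ∃ δ : ℝ, 0 < δ ∧
      ∀ (x : ℝ → E2) (z1 z2 : ℝ → ℝ), IsSolution c x z1 z2 →
        initNorm x z1 z2 ≤ δ →
        ∀ t : ℝ, 0 ≤ t → Xnorm x z1 z2 t ≤ ε := by
  intro ε hε
  set δ := min (1 / 200) (ε / 3)
  refine ⟨δ, by positivity, fun x z1 z2 hsol hinit t ht => ?_⟩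
  have hXinit : ∀ τ ∈ Icc (-2 : ℝ) 0, Xnorm x z1 z2 τ ≤ δ := fun τ hτ =>
    (Xnorm_le_initNorm (hsol.1.mono Icc_subset_Ici_self) (hsol.2.1.mono Icc_subset_Ici_self)
      (hsol.2.2.1.mono Icc_subset_Ici_self) hτ).trans hinit
  have hx0 : ‖x 0‖ ≤ δ := (norm_le_Xnorm x z1 z2 0).trans (hXinit 0 (by norm_num))
  have hz1 : |z1 t| ≤ δ :=
    abs_le_of_abs_le_on_Icc (by norm_num) hsol.2.1 (fun s hs => (hsol.2.2.2 s hs).2.1)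
      (fun τ hτ => (abs_z1_le_Xnorm x z1 z2 τ).trans (hXinit τ hτ)) (by linarith)
  have hz2 : ∀ s ≥ -2, |z2 s| ≤ δ := fun s hs =>
    abs_le_of_abs_le_on_Icc (by norm_num) hsol.2.2.1 (fun s hs => (hsol.2.2.2 s hs).2.2)
      (fun τ hτ => (abs_z2_le_Xnorm x z1 z2 τ).trans (hXinit τ hτ)) hs
  have hδ : δ ≤ 1 / 200 := min_le_left _ _
  have hx : ‖x t‖ ^ 2 ≤ 6 * ‖x 0‖ ^ 2 :=
    hsol.norm_sq_le hc.le (fun s hs => ((le_abs_self _).trans (hz2 s hs)).trans hδ)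
      (by nlinarith [norm_nonneg (x 0)]) ht
  have hsq {a : ℝ} (ha : |a| ≤ δ) : a ^ 2 ≤ (ε / 3) ^ 2 := by
    rw [← sq_abs]; exact pow_le_pow_left₀ (abs_nonneg a) (ha.trans (min_le_right _ _)) 2
  rw [Xnorm, Real.sqrt_le_left hε.le]
  nlinarith [hsq (a := ‖x 0‖) (by rwa [abs_norm]), hsq hz1, hsq (hz2 t (by linarith))]
end
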